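/- Decomposition lemma: for every derivation tree T ∈ Trees(G), the decomposition d(T) = (T', S) satisfies: (1) T' is a simple derivation tree in Trees(G); (2) every element of S is a simple adjunct tree; (3) T can be obtained from T' by adjoining each element of S at least once (in particular T ∈ Adj⁺(T', S) ⊆ Trees(G)). -/

import Mathlib

/-- Trees whose internal nodes are labeled by nonterminals in `V`
and whose leaves are labeled by elements of `L`. -/
inductive PTree (V L : Type) : Type
  | leaf : L → PTree V L
  | node : V → List (PTree V L) → PTree V L

namespace PTree

variable {V A L : Type}

/-- Leaf alphabet for contexts/adjunct trees: a letter-or-ε leaf, or the hole. -/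
abbrev Aug (A : Type) := Option A ⊕ Unit

/-- The root label of a tree: a nonterminal or a leaf label. -/
def rootLabel : PTree V L → V ⊕ L
  | .leaf a => .inr a
  | .node X _ => .inl X

/-- Set of nonterminals occurring in a tree. -/
def ntSet : PTree V L → Set V
  | .leaf _ => ∅
  | .node X ts => insert X ((ts.attach.map (fun ⟨t, _⟩ => ntSet t)).foldr (· ∪ ·) ∅)

/-- A tree is simple if no nonterminal occurs twice on a root-to-leaf path. -/
def Simple : PTree V L → Prop
  | .leaf _ => True
  | .node X ts => ∀ t ∈ ts, X ∉ ntSet t ∧ Simple t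

/-- Number of holes in a context / adjunct tree. -/
def holes : PTree V (Aug A) → ℕ
  | .leaf (.inr _) => 1
  | .leaf (.inl _) => 0
  | .node _ ts => (ts.attach.map (fun ⟨t, _⟩ => holes t)).sum

/-- Substitute the tree `T` for every hole. -/
def subst (T : PTree V (Option A)) : PTree V (Aug A) → PTree V (Option A)
  | .leaf (.inl a) => .leaf a
  | .leaf (.inr _) => T
  | .node X ts => .node X (ts.attach.map (fun ⟨t, _⟩ => subst T t))

/-- Embed a `(V,A)`-tree into trees with holes (no holes created). -/
def toAug : PTree V (Option A) → PTree V (Aug A)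
  | .leaf a => .leaf (.inl a)
  | .node X ts => .node X (ts.attach.map (fun ⟨t, _⟩ => toAug t))

/-- Yield of a `(V,A)`-tree. -/
def yield : PTree V (Option A) → List A
  | .leaf none => []
  | .leaf (some a) => [a]
  | .node _ ts => (ts.attach.map (fun ⟨t, _⟩ => yield t)).flatten

/-- Yield of a context / adjunct tree, holes contributing `ε`. -/
def yieldA : PTree V (Aug A) → List A
  | .leaf (.inl none) => []
  | .leaf (.inl (some a)) => [a]
  | .leaf (.inr _) => []
  | .node _ ts => (ts.attach.map (fun ⟨t, _⟩ => yieldA t)).flatten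

/-- Height of a tree. -/
def height : PTree V L → ℕ
  | .leaf _ => 0
  | .node _ ts => (ts.attach.map (fun ⟨t, _⟩ => height t)).foldr max 0 + 1

/-- Size (number of nodes) of a tree. -/
def tsize : PTree V L → ℕ
  | .leaf _ => 1
  | .node _ ts => (ts.attach.map (fun ⟨t, _⟩ => tsize t)).sum + 1

end PTree

open PTree

/-- A context-free grammar over `A` with nonterminals `V`:
a finite set of rules `D ⊆ V × (V ∪ A ∪ {ε})⁺` and a start symbol. -/
structure CFG (V A : Type) where
  rules : Set (V × List (V ⊕ Option A))
  rules_fin : rules.Finite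
  start : V

variable {V A : Type}

/-- A tree is a valid derivation w.r.t. the rules `D`. -/
inductive IsDeriv (D : Set (V × List (V ⊕ Option A))) : PTree V (Option A) → Prop
  | leaf (a : Option A) : IsDeriv D (.leaf a)
  | node (X : V) (ts : List (PTree V (Option A))) :
      (X, ts.map rootLabel) ∈ D → (∀ t ∈ ts, IsDeriv D t) → IsDeriv D (.node X ts)

/-- The set `Trees(G)` of derivation trees of `G`. -/
def TreesSet (G : CFG V A) : Set (PTree V (Option A)) :=
  {T | T.rootLabel = .inl G.start ∧ IsDeriv G.rules T}

/-- The language of `G`: yields of derivation trees. -/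
def lang (G : CFG V A) : Set (List A) := PTree.yield '' TreesSet G

/-- An adjunct tree is represented by its root nonterminal `X` together with a tree
over `V, A ∪ {X}` (the distinguished leaf `X` being the hole). -/
abbrev AdjT (V A : Type) := V × PTree V (Aug A)

/-- Wellformedness of an adjunct tree: root node labeled `X`, exactly one `X`-leaf. -/
def WFAdjunct (p : AdjT V A) : Prop :=
  (∃ ts, p.2 = PTree.node p.1 ts) ∧ p.2.holes = 1

/-- A simple adjunct tree: no nonterminal repeats on paths from a child of the root. -/
def SimpleAdjunct (p : AdjT V A) : Prop :=
  ∃ ts, p.2 = PTree.node p.1 ts ∧ ∀ t ∈ ts, Simple t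

/-- Root label of a subtree of an adjunct tree with root nonterminal `X`:
the hole leaf is labeled `X`. -/
def augRoot (X : V) : PTree V (Aug A) → V ⊕ Option A
  | .leaf (.inl a) => .inr a
  | .leaf (.inr _) => .inl X
  | .node Y _ => .inl Y

/-- An adjunct tree is extracted from derivation trees of `D`: every internal
node respects the rules. -/
inductive IsDerivA (D : Set (V × List (V ⊕ Option A))) (X : V) : PTree V (Aug A) → Prop
  | leaf (a : Aug A) : IsDerivA D X (.leaf a)
  | node (Y : V) (ts : List (PTree V (Aug A))) :
      (Y, ts.map (augRoot X)) ∈ D → (∀ t ∈ ts, IsDerivA D X t) → IsDerivA D X (.node Y ts)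

/-- `T ⊢_α T'` : `T'` is obtained from `T` by adjoining the adjunct tree `α`
at some occurrence of its root nonterminal. -/
def Adjoins (α : AdjT V A) (T T' : PTree V (Option A)) : Prop :=
  WFAdjunct α ∧
  ∃ (C : PTree V (Aug A)) (ts : List (PTree V (Option A))),
    C.holes = 1 ∧
    subst (.node α.1 ts) C = T ∧
    subst (subst (.node α.1 ts) α.2) C = T'

/-- `AdjChain L T T'` : `T'` is obtained from `T` by successively adjoining
the adjunct trees listed in `L`. -/
def AdjChain : List (AdjT V A) → PTree V (Option A) → PTree V (Option A) → Prop
  | [], T, T' => T = T'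
  | α :: L, T, T' => ∃ T₁, Adjoins α T T₁ ∧ AdjChain L T₁ T'

/-- `Adj⁺(T,S)` : trees obtained from `T` using exactly the adjunct trees of `S`,
each at least once. -/
def AdjPlus (T : PTree V (Option A)) (S : Set (AdjT V A)) : Set (PTree V (Option A)) :=
  {T' | ∃ L : List (AdjT V A), AdjChain L T T' ∧ {α | α ∈ L} = S}

/-- `Adj(T,S)` : trees obtained from `T` using adjunct trees of `S`, arbitrarily often. -/
def AdjStar (T : PTree V (Option A)) (S : Set (AdjT V A)) : Set (PTree V (Option A)) :=
  {T' | ∃ L : List (AdjT V A), AdjChain L T T' ∧ {α | α ∈ L} ⊆ S}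

namespace PTree
variable [DecidableEq V]

mutual
/-- Find the leftmost `X`-rooted subtree: returns the surrounding context
(with a hole in its place) and the subtree. -/
def extract (X : V) : PTree V (Option A) → Option (PTree V (Aug A) × PTree V (Option A))
  | .leaf _ => none
  | .node Y ts =>
    if Y = X then some (.leaf (.inr ()), .node Y ts)
    else match extractL X ts with
      | none => none
      | some (Cs, sub) => some (.node Y Cs, sub)

/-- List version of `extract`. -/
def extractL (X : V) : List (PTree V (Option A)) → Option (List (PTree V (Aug A)) × PTree V (Option A))
  | [] => none
  | t :: ts =>
    match extract X t with
    | some (C, sub) => some (C :: ts.map toAug, sub)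
    | none =>
      match extractL X ts with
      | some (Cs, sub) => some (toAug t :: Cs, sub)
      | none => none
end

/-- Takahashi's decomposition of a tree into a simple tree and a set of
simple adjunct trees. -/
def decomp : PTree V (Option A) → PTree V (Option A) × Set (AdjT V A)
  | .leaf a => (.leaf a, ∅)
  | .node X ts =>
    let rs := ts.attach.map (fun ⟨t, _⟩ => decomp t)
    let S := (rs.map Prod.snd).foldr (· ∪ ·) ∅
    match extractL X (rs.map Prod.fst) with
    | none => (.node X (rs.map Prod.fst), S)
    | some (Cs, sub) => (sub, insert (X, PTree.node X Cs) S)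

end PTree

/-- The simple trees arising from decompositions of derivation trees. -/
def sTrees (G : CFG V A) [DecidableEq V] : Set (PTree V (Option A)) :=
  {T' | ∃ T ∈ TreesSet G, (decomp T).1 = T'}

/-- The simple adjunct trees arising from decompositions of derivation trees. -/
def sLoops (G : CFG V A) [DecidableEq V] : Set (AdjT V A) :=
  {α | ∃ T ∈ TreesSet G, α ∈ (decomp T).2}

/-- Parikh map. -/
def parikh [DecidableEq A] (w : List A) : A → ℕ := fun a => w.count a

/-- Linear subsets of `ℕ^A`. -/
def IsLinear (S : Set (A → ℕ)) : Prop :=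
  ∃ (v₀ : A → ℕ) (k : ℕ) (v : Fin k → A → ℕ),
    S = {u | ∃ x : Fin k → ℕ, u = v₀ + ∑ i, x i • v i}

/-- Semilinear subsets of `ℕ^A`: finite unions of linear sets. -/
def IsSemilinear (S : Set (A → ℕ)) : Prop :=
  ∃ (n : ℕ) (f : Fin n → Set (A → ℕ)), (∀ i, IsLinear (f i)) ∧ S = ⋃ i, f i

/-!
At a node labelled `X` the children are decomposed first. If `X` occurs in one of the resulting
simple trees, extraction cuts out the leftmost `X`-rooted subtree `sub`: the context left behind
has exactly one hole, and plugging `sub` back in restores the node. So the adjunct tree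
`X(context)` adjoined to `sub` rebuilds the node, and the children's adjunct trees are then
adjoined inside the children, left to right. The new tree is simple because the children are,
and `X` survives below the node only when nothing is cut. Cutting and plugging never change the
rule used at a node, so derivations are preserved both by the decomposition and by adjoining.
-/

theorem List.mem_foldr_union_map {ι β : Type*} {s : ι → Set β} {l : List ι} {x : β} :
    x ∈ (l.map s).foldr (· ∪ ·) ∅ ↔ ∃ i ∈ l, x ∈ s i := by
  induction l with
  | nil => simp
  | cons i l ih => simp [ih]

namespace PTree

variable {V A L : Type}

theorem ind {P : PTree V L → Prop} (leaf : ∀ a, P (.leaf a))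
    (node : ∀ X ts, (∀ t ∈ ts, P t) → P (.node X ts)) : ∀ t, P t :=
  PTree.rec (motive_2 := fun ts => ∀ t ∈ ts, P t) leaf node (by simp)
    fun _ _ iht ihts => List.forall_mem_cons.2 ⟨iht, ihts⟩

theorem mem_ntSet_node {X x : V} {ts : List (PTree V L)} :
    x ∈ (node X ts).ntSet ↔ x = X ∨ ∃ t ∈ ts, x ∈ t.ntSet := by
  simp [ntSet, List.mem_foldr_union_map]

@[simp] theorem subst_leaf_inl (U : PTree V (Option A)) (a : Option A) :
    subst U (.leaf (.inl a)) = .leaf a := by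
  simp [subst]

@[simp] theorem subst_leaf_inr (U : PTree V (Option A)) (u : Unit) :
    subst U (.leaf (.inr u)) = U := by
  simp [subst]

@[simp] theorem subst_node (U : PTree V (Option A)) (X : V) (cs : List (PTree V (Aug A))) :
    subst U (.node X cs) = .node X (cs.map (subst U)) := by
  simp [subst]

@[simp] theorem holes_leaf_inr (u : Unit) :
    (leaf (.inr u) : PTree V (Aug A)).holes = 1 := by
  simp [holes]

@[simp] theorem holes_node (X : V) (cs : List (PTree V (Aug A))) :
    (node X cs).holes = (cs.map holes).sum := by
  simp [holes]

@[simp] theorem toAug_node (X : V) (ts : List (PTree V (Option A))) :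
    (node X ts).toAug = .node X (ts.map toAug) := by
  simp [toAug]

@[simp] theorem holes_toAug (t : PTree V (Option A)) : t.toAug.holes = 0 := by
  induction t using PTree.ind with
  | leaf a => simp [toAug, holes]
  | node X ts ih => simpa [List.sum_eq_zero_iff] using fun t ht => ih t ht

@[simp] theorem subst_toAug (U t : PTree V (Option A)) : subst U t.toAug = t := by
  induction t using PTree.ind with
  | leaf a => simp [toAug]
  | node X ts ih => simpa [Function.comp_def] using List.map_congr_left ih

theorem Simple.of_mem {X : V} {ts : List (PTree V L)} (h : (node X ts).Simple) {t : PTree V L}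
    (ht : t ∈ ts) : t.Simple := by
  unfold Simple at h
  exact (h t ht).2

theorem ntSet_subset_ntSet_subst (U : PTree V (Option A)) (C : PTree V (Aug A)) :
    C.ntSet ⊆ (subst U C).ntSet := by
  induction C using PTree.ind with
  | leaf a => simp [ntSet]
  | node X cs ih =>
    intro x hx
    simp only [subst_node, mem_ntSet_node, List.mem_map] at hx ⊢
    exact hx.imp_right fun ⟨c, hc, hxc⟩ => ⟨_, ⟨c, hc, rfl⟩, ih c hc hxc⟩

theorem Simple.of_subst {U : PTree V (Option A)} {C : PTree V (Aug A)}
    (h : (subst U C).Simple) : C.Simple := by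
  induction C using PTree.ind with
  | leaf a => simp [Simple]
  | node X cs ih =>
    simp only [subst_node, Simple, List.forall_mem_map] at h
    simp only [Simple]
    exact fun c hc =>
      ⟨fun hX => (h c hc).1 (ntSet_subset_ntSet_subst U c hX), ih c hc (h c hc).2⟩

theorem of_subst_of_holes_ne_zero {P : PTree V (Option A) → Prop}
    (hP : ∀ X ts, P (node X ts) → ∀ t ∈ ts, P t) {U : PTree V (Option A)}
    {C : PTree V (Aug A)} (hC : C.holes ≠ 0) (h : P (subst U C)) : P U := by
  induction C using PTree.ind with
  | leaf a => rcases a with a | u <;> simp_all [holes]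
  | node X cs ih =>
    obtain ⟨c, hc, hc0⟩ : ∃ c ∈ cs, c.holes ≠ 0 := by
      simpa [List.sum_eq_zero_iff] using hC
    rw [subst_node] at h
    exact ih c hc hc0 (hP _ _ h _ (List.mem_map_of_mem hc))

theorem of_forall_mem_map_subst {P : PTree V (Option A) → Prop}
    (hP : ∀ X ts, P (node X ts) → ∀ t ∈ ts, P t) {U : PTree V (Option A)}
    {Cs : List (PTree V (Aug A))} (hCs : (Cs.map holes).sum ≠ 0)
    (h : ∀ t ∈ Cs.map (subst U), P t) : P U := by
  obtain ⟨c, hc, hc0⟩ : ∃ c ∈ Cs, c.holes ≠ 0 := by simpa [List.sum_eq_zero_iff] using hCs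
  exact of_subst_of_holes_ne_zero hP hc0 (h _ (List.mem_map_of_mem hc))

theorem rootLabel_subst {U : PTree V (Option A)} {X : V} (hU : U.rootLabel = .inl X)
    (C : PTree V (Aug A)) : (subst U C).rootLabel = augRoot X C := by
  rcases C with (a | u) | ⟨Y, cs⟩ <;> simp [rootLabel, augRoot, ← hU]

end PTree

open PTree

theorem isDeriv_node_iff {D : Set (V × List (V ⊕ Option A))} {X : V}
    {ts : List (PTree V (Option A))} :
    IsDeriv D (.node X ts) ↔ (X, ts.map rootLabel) ∈ D ∧ ∀ t ∈ ts, IsDeriv D t :=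
  ⟨fun | .node _ _ h1 h2 => ⟨h1, h2⟩, fun ⟨h1, h2⟩ => .node X ts h1 h2⟩

theorem IsDeriv.of_subst {D : Set (V × List (V ⊕ Option A))} {U : PTree V (Option A)}
    {C : PTree V (Aug A)} (hC : C.holes ≠ 0) (h : IsDeriv D (subst U C)) : IsDeriv D U :=
  of_subst_of_holes_ne_zero (fun _ _ h => (isDeriv_node_iff.1 h).2) hC h

theorem isDerivA_of_isDeriv_subst {D : Set (V × List (V ⊕ Option A))} {U : PTree V (Option A)}
    {X : V} (hU : U.rootLabel = .inl X) {C : PTree V (Aug A)} (h : IsDeriv D (subst U C)) :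
    IsDerivA D X C := by
  induction C using PTree.ind with
  | leaf a => exact .leaf a
  | node Y cs ih =>
    rw [subst_node, isDeriv_node_iff, List.map_map] at h
    refine .node Y cs ?_ fun c hc => ih c hc (h.2 _ (List.mem_map_of_mem hc))
    simpa [Function.comp_def, rootLabel_subst hU] using h.1

theorem IsDeriv.subst {D : Set (V × List (V ⊕ Option A))} {U : PTree V (Option A)} {X : V}
    (hU : U.rootLabel = .inl X) (hDU : IsDeriv D U) {C : PTree V (Aug A)}
    (hC : IsDerivA D X C) : IsDeriv D (subst U C) := by
  induction hC with
  | leaf a => rcases a with a | u <;> simp [IsDeriv.leaf, hDU]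
  | node Y cs hrule _ ih =>
    rw [subst_node, isDeriv_node_iff, List.map_map]
    refine ⟨?_, by simpa using ih⟩
    simpa [Function.comp_def, rootLabel_subst hU] using hrule

section Adjoining

variable {α : AdjT V A} {T₀ T₁ : PTree V (Option A)}

theorem Adjoins.rootLabel_eq (h : Adjoins α T₀ T₁) : T₁.rootLabel = T₀.rootLabel := by
  obtain ⟨⟨⟨cs, hcs⟩, -⟩, C, ts, -, rfl, rfl⟩ := h
  rw [rootLabel_subst (X := α.1) (by simp [hcs, rootLabel]), rootLabel_subst rfl]

theorem Adjoins.isDeriv {D : Set (V × List (V ⊕ Option A))} (h : Adjoins α T₀ T₁)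
    (hα : IsDerivA D α.1 α.2) (h₀ : IsDeriv D T₀) : IsDeriv D T₁ := by
  obtain ⟨⟨⟨cs, hcs⟩, -⟩, C, ts, hC, rfl, rfl⟩ := h
  have hU : IsDeriv D (.node α.1 ts) := h₀.of_subst (by omega)
  have hαU : IsDeriv D (subst (.node α.1 ts) α.2) := hU.subst rfl hα
  exact hαU.subst (by simp [hcs, rootLabel]) (isDerivA_of_isDeriv_subst rfl h₀)

theorem Adjoins.node_context (h : Adjoins α T₀ T₁) (X : V)
    (pre post : List (PTree V (Option A))) :
    Adjoins α (.node X (pre ++ T₀ :: post)) (.node X (pre ++ T₁ :: post)) := by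
  obtain ⟨hα, C, ts, hC, rfl, rfl⟩ := h
  refine ⟨hα, .node X (pre.map toAug ++ C :: post.map toAug), ts, ?_, ?_, ?_⟩ <;>
    simp [Function.comp_def, hC]

theorem AdjChain.append {L₁ L₂ : List (AdjT V A)} {T₂ : PTree V (Option A)}
    (h₁ : AdjChain L₁ T₀ T₁) (h₂ : AdjChain L₂ T₁ T₂) :
    AdjChain (L₁ ++ L₂) T₀ T₂ := by
  induction L₁ generalizing T₀ with
  | nil => exact (show T₀ = T₁ from h₁) ▸ h₂
  | cons α L ih =>
    obtain ⟨T, hα, hL⟩ := h₁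
    exact ⟨T, hα, ih hL⟩

theorem AdjChain.node_context {L : List (AdjT V A)} (h : AdjChain L T₀ T₁) (X : V)
    (pre post : List (PTree V (Option A))) :
    AdjChain L (.node X (pre ++ T₀ :: post)) (.node X (pre ++ T₁ :: post)) := by
  induction L generalizing T₀ with
  | nil => exact (show T₀ = T₁ from h) ▸ rfl
  | cons α L ih =>
    obtain ⟨T, hα, hL⟩ := h
    exact ⟨_, hα.node_context X pre post, ih hL⟩

theorem AdjChain.rootLabel_eq {L : List (AdjT V A)} (h : AdjChain L T₀ T₁) :
    T₁.rootLabel = T₀.rootLabel := by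
  induction L generalizing T₀ with
  | nil => exact congrArg _ (show T₀ = T₁ from h).symm
  | cons α L ih =>
    obtain ⟨T, hα, hL⟩ := h
    exact (ih hL).trans hα.rootLabel_eq

theorem AdjChain.isDeriv {D : Set (V × List (V ⊕ Option A))} {L : List (AdjT V A)}
    (h : AdjChain L T₀ T₁) (hL : ∀ α ∈ L, IsDerivA D α.1 α.2) (h₀ : IsDeriv D T₀) :
    IsDeriv D T₁ := by
  induction L generalizing T₀ with
  | nil => exact (show T₀ = T₁ from h) ▸ h₀
  | cons α L ih =>
    obtain ⟨T, hα, hL'⟩ := h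
    exact ih hL' (fun β hβ => hL β (.tail _ hβ)) (hα.isDeriv (hL α (.head _)) h₀)

variable {T₂ : PTree V (Option A)} {S S' : Set (AdjT V A)}

theorem mem_adjPlus_self (T : PTree V (Option A)) : T ∈ AdjPlus T ∅ :=
  ⟨[], rfl, by simp⟩

theorem mem_adjPlus_insert (hα : Adjoins α T₀ T₁) (h : T₂ ∈ AdjPlus T₁ S) :
    T₂ ∈ AdjPlus T₀ (insert α S) := by
  obtain ⟨L, hL, rfl⟩ := h
  exact ⟨α :: L, ⟨T₁, hα, hL⟩, by ext; simp⟩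

theorem mem_adjPlus_trans (h₁ : T₁ ∈ AdjPlus T₀ S) (h₂ : T₂ ∈ AdjPlus T₁ S') :
    T₂ ∈ AdjPlus T₀ (S ∪ S') := by
  obtain ⟨L₁, hL₁, rfl⟩ := h₁
  obtain ⟨L₂, hL₂, rfl⟩ := h₂
  exact ⟨L₁ ++ L₂, hL₁.append hL₂, by ext; simp⟩

theorem mem_adjPlus_node_context (h : T₁ ∈ AdjPlus T₀ S) (X : V)
    (pre post : List (PTree V (Option A))) :
    .node X (pre ++ T₁ :: post) ∈ AdjPlus (.node X (pre ++ T₀ :: post)) S := by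
  obtain ⟨L, hL, rfl⟩ := h
  exact ⟨L, hL.node_context X pre post, rfl⟩

theorem mem_adjPlus_node_map {f : PTree V (Option A) → PTree V (Option A)}
    {s : PTree V (Option A) → Set (AdjT V A)} (X : V) {ts : List (PTree V (Option A))}
    (h : ∀ t ∈ ts, t ∈ AdjPlus (f t) (s t)) (pre : List (PTree V (Option A))) :
    .node X (pre ++ ts) ∈
      AdjPlus (.node X (pre ++ ts.map f)) ((ts.map s).foldr (· ∪ ·) ∅) := by
  induction ts generalizing pre with
  | nil => simpa using mem_adjPlus_self _
  | cons t ts ih =>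
    have ht := mem_adjPlus_node_context (h t (.head _)) X pre (ts.map f)
    have hts := ih (fun u hu => h u (.tail _ hu)) (pre ++ [t])
    rw [List.append_cons pre t] at ht ⊢
    simpa using mem_adjPlus_trans ht hts

theorem adjPlus_subset_treesSet {G : CFG V A} {T : PTree V (Option A)} (hT : T ∈ TreesSet G)
    (hS : ∀ α ∈ S, IsDerivA G.rules α.1 α.2) : AdjPlus T S ⊆ TreesSet G := by
  rintro T' ⟨L, hL, rfl⟩
  exact ⟨hL.rootLabel_eq.trans hT.1, hL.isDeriv hS hT.2⟩

end Adjoining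

namespace PTree

variable [DecidableEq V] {X : V}

mutual

theorem extract_eq_some : ∀ {t : PTree V (Option A)} {C sub}, extract X t = some (C, sub) →
    C.holes = 1 ∧ subst sub C = t ∧ ∃ ss, sub = node X ss
  | .leaf _, _, _, h => by simp [extract] at h
  | .node Y ts, C, sub, h => by
    rw [extract] at h
    split_ifs at h with hY
    · cases h
      exact ⟨by simp, by simp, ts, by rw [hY]⟩
    · split at h
      · cases h
      · rename_i Cs s hs
        cases h
        obtain ⟨h1, h2, h3⟩ := extractL_eq_some hs
        exact ⟨by simp [h1], by simp [h2], h3⟩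

theorem extractL_eq_some : ∀ {ts : List (PTree V (Option A))} {Cs sub},
    extractL X ts = some (Cs, sub) →
    (Cs.map holes).sum = 1 ∧ Cs.map (subst sub) = ts ∧ ∃ ss, sub = node X ss
  | [], _, _, h => by simp [extractL] at h
  | t :: ts, Cs, sub, h => by
    rw [extractL] at h
    split at h
    · rename_i C s ht
      cases h
      obtain ⟨h1, h2, h3⟩ := extract_eq_some ht
      exact ⟨by simp [Function.comp_def, h1], by simp [Function.comp_def, h2], h3⟩
    · split at h
      · rename_i Cs s hts
        cases h
        obtain ⟨h1, h2, h3⟩ := extractL_eq_some hts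
        exact ⟨by simp [h1], by simp [h2], h3⟩
      · cases h

end

mutual

theorem notMem_ntSet_of_extract_eq_none :
    ∀ {t : PTree V (Option A)}, extract X t = none → X ∉ t.ntSet
  | .leaf _, _ => by simp [ntSet]
  | .node Y ts, h => by
    rw [extract] at h
    split_ifs at h with hY
    split at h
    · rename_i hts
      rw [mem_ntSet_node]
      rintro (rfl | ⟨t, ht, hX⟩)
      · exact hY rfl
      · exact notMem_ntSet_of_extractL_eq_none hts t ht hX
    · cases h

theorem notMem_ntSet_of_extractL_eq_none :
    ∀ {ts : List (PTree V (Option A))}, extractL X ts = none → ∀ t ∈ ts, X ∉ t.ntSet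
  | [], _ => by simp
  | t :: ts, h => by
    rw [extractL] at h
    split at h
    · cases h
    · rename_i ht
      split at h
      · cases h
      · rename_i hts
        exact List.forall_mem_cons.2
          ⟨notMem_ntSet_of_extract_eq_none ht, notMem_ntSet_of_extractL_eq_none hts⟩

end

theorem adjoins_of_extractL_eq_some {ts : List (PTree V (Option A))} {Cs sub}
    (h : extractL X ts = some (Cs, sub)) : Adjoins (X, node X Cs) sub (node X ts) := by
  obtain ⟨h1, h2, ss, rfl⟩ := extractL_eq_some h
  exact ⟨⟨⟨Cs, rfl⟩, by simp [h1]⟩, .leaf (.inr ()), ss, by simp, by simp, by simp [h2]⟩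

theorem decomp_node {ts : List (PTree V (Option A))} :
    decomp (node X ts) =
      match extractL X (ts.map fun t => (decomp t).1) with
      | none => (node X (ts.map fun t => (decomp t).1),
          (ts.map fun t => (decomp t).2).foldr (· ∪ ·) ∅)
      | some (Cs, sub) =>
        (sub, insert (X, node X Cs) ((ts.map fun t => (decomp t).2).foldr (· ∪ ·) ∅)) := by
  rw [decomp]
  simp only [List.map_subtype, List.map_map, List.unattach_attach]
  rfl

theorem decomp_node_of_extractL_eq_none {ts : List (PTree V (Option A))}
    (h : extractL X (ts.map fun t => (decomp t).1) = none) :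
    decomp (node X ts) = (node X (ts.map fun t => (decomp t).1),
      (ts.map fun t => (decomp t).2).foldr (· ∪ ·) ∅) := by
  rw [decomp_node, h]

theorem decomp_node_of_extractL_eq_some {ts : List (PTree V (Option A))}
    {Cs : List (PTree V (Aug A))} {sub : PTree V (Option A)}
    (h : extractL X (ts.map fun t => (decomp t).1) = some (Cs, sub)) :
    decomp (node X ts) =
      (sub, insert (X, node X Cs) ((ts.map fun t => (decomp t).2).foldr (· ∪ ·) ∅)) := by
  rw [decomp_node, h]

theorem rootLabel_decomp (T : PTree V (Option A)) : (decomp T).1.rootLabel = T.rootLabel := by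
  induction T using PTree.ind with
  | leaf a => simp [decomp]
  | node X ts _ =>
    rcases h : extractL X (ts.map fun t => (decomp t).1) with _ | ⟨Cs, sub⟩
    · rw [decomp_node_of_extractL_eq_none h]; rfl
    · obtain ⟨-, -, ss, rfl⟩ := extractL_eq_some h
      rw [decomp_node_of_extractL_eq_some h]; rfl

theorem simple_decomp (T : PTree V (Option A)) : (decomp T).1.Simple := by
  induction T using PTree.ind with
  | leaf a => simp [decomp, Simple]
  | node X ts ih =>
    rcases h : extractL X (ts.map fun t => (decomp t).1) with _ | ⟨Cs, sub⟩
    · rw [decomp_node_of_extractL_eq_none h]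
      simp only [Simple, List.forall_mem_map]
      exact fun t ht =>
        ⟨notMem_ntSet_of_extractL_eq_none h _ (List.mem_map_of_mem ht), ih t ht⟩
    · obtain ⟨h1, h2, -⟩ := extractL_eq_some h
      rw [decomp_node_of_extractL_eq_some h]
      refine of_forall_mem_map_subst (Cs := Cs) (fun _ _ h _ => h.of_mem) (by omega) ?_
      simpa [h2] using ih

theorem wfAdjunct_and_simpleAdjunct_of_mem_decomp (T : PTree V (Option A)) :
    ∀ α ∈ (decomp T).2, WFAdjunct α ∧ SimpleAdjunct α := by
  induction T using PTree.ind with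
  | leaf a => simp [decomp]
  | node X ts ih =>
    have hchildren : ∀ α ∈ (ts.map fun t => (decomp t).2).foldr (· ∪ ·) ∅,
        WFAdjunct α ∧ SimpleAdjunct α := by
      simp only [List.mem_foldr_union_map]
      exact fun α ⟨t, ht, hα⟩ => ih t ht α hα
    rcases h : extractL X (ts.map fun t => (decomp t).1) with _ | ⟨Cs, sub⟩
    · rwa [decomp_node_of_extractL_eq_none h]
    · obtain ⟨h1, h2, -⟩ := extractL_eq_some h
      rw [decomp_node_of_extractL_eq_some h]
      refine Set.forall_mem_insert.2
        ⟨⟨⟨⟨Cs, rfl⟩, by simp [h1]⟩, Cs, rfl, ?_⟩, hchildren⟩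
      intro C hC
      refine Simple.of_subst (U := sub) ?_
      obtain ⟨t, ht, hCt⟩ := List.mem_map.1 (h2 ▸ List.mem_map_of_mem hC : subst sub C ∈ _)
      exact hCt ▸ simple_decomp t

theorem isDeriv_node_map_decomp {D : Set (V × List (V ⊕ Option A))}
    {ts : List (PTree V (Option A))} (h : IsDeriv D (node X ts))
    (hts : ∀ t ∈ ts, IsDeriv D (decomp t).1) :
    IsDeriv D (node X (ts.map fun t => (decomp t).1)) := by
  rw [isDeriv_node_iff] at h ⊢
  refine ⟨?_, by simpa using hts⟩
  simpa [Function.comp_def, rootLabel_decomp] using h.1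

theorem isDeriv_decomp {D : Set (V × List (V ⊕ Option A))} {T : PTree V (Option A)}
    (hT : IsDeriv D T) : IsDeriv D (decomp T).1 := by
  induction T using PTree.ind with
  | leaf a => simpa [decomp] using hT
  | node X ts ih =>
    have hnode := isDeriv_node_map_decomp hT fun t ht =>
      ih t ht ((isDeriv_node_iff.1 hT).2 t ht)
    rcases h : extractL X (ts.map fun t => (decomp t).1) with _ | ⟨Cs, sub⟩
    · rwa [decomp_node_of_extractL_eq_none h]
    · obtain ⟨h1, h2, -⟩ := extractL_eq_some h
      rw [decomp_node_of_extractL_eq_some h]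
      exact IsDeriv.of_subst (C := node X Cs) (by simp [h1]) (by simpa [h2] using hnode)

theorem isDerivA_of_mem_decomp {D : Set (V × List (V ⊕ Option A))} {T : PTree V (Option A)}
    (hT : IsDeriv D T) : ∀ α ∈ (decomp T).2, IsDerivA D α.1 α.2 := by
  induction T using PTree.ind with
  | leaf a => simp [decomp]
  | node X ts ih =>
    obtain ⟨-, hts⟩ := isDeriv_node_iff.1 hT
    have hchildren : ∀ α ∈ (ts.map fun t => (decomp t).2).foldr (· ∪ ·) ∅,
        IsDerivA D α.1 α.2 := by
      simp only [List.mem_foldr_union_map]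
      exact fun α ⟨t, ht, hα⟩ => ih t ht (hts t ht) α hα
    rcases h : extractL X (ts.map fun t => (decomp t).1) with _ | ⟨Cs, sub⟩
    · rwa [decomp_node_of_extractL_eq_none h]
    · obtain ⟨-, h2, ss, rfl⟩ := extractL_eq_some h
      rw [decomp_node_of_extractL_eq_some h]
      refine Set.forall_mem_insert.2
        ⟨isDerivA_of_isDeriv_subst (U := node X ss) rfl ?_, hchildren⟩
      simpa [h2] using isDeriv_node_map_decomp hT fun t ht => isDeriv_decomp (hts t ht)

theorem mem_adjPlus_decomp (T : PTree V (Option A)) : T ∈ AdjPlus (decomp T).1 (decomp T).2 := by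
  induction T using PTree.ind with
  | leaf a => simpa [decomp] using mem_adjPlus_self _
  | node X ts ih =>
    have hchildren := mem_adjPlus_node_map X ih []
    rw [List.nil_append, List.nil_append] at hchildren
    rcases h : extractL X (ts.map fun t => (decomp t).1) with _ | ⟨Cs, sub⟩
    · rwa [decomp_node_of_extractL_eq_none h]
    · rw [decomp_node_of_extractL_eq_some h]
      exact mem_adjPlus_insert (adjoins_of_extractL_eq_some h) hchildren

end PTree

/-- Decomposition lemma: for `T ∈ Trees(G)` and `d(T) = (T', S)`:
(1) `T'` is a simple derivation tree; (2) every element of `S` is a simple adjunct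
tree; (3) `T ∈ Adj⁺(T', S) ⊆ Trees(G)`. -/
theorem decomposition_lemma {V A : Type} [DecidableEq V] (G : CFG V A)
    (T : PTree V (Option A)) (hT : T ∈ TreesSet G) :
    (PTree.decomp T).1.Simple ∧ (PTree.decomp T).1 ∈ TreesSet G ∧
    (∀ α ∈ (PTree.decomp T).2, WFAdjunct α ∧ SimpleAdjunct α) ∧
    T ∈ AdjPlus (PTree.decomp T).1 (PTree.decomp T).2 ∧
    AdjPlus (PTree.decomp T).1 (PTree.decomp T).2 ⊆ TreesSet G := by
  have hdecomp : (decomp T).1 ∈ TreesSet G :=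
    ⟨(rootLabel_decomp T).trans hT.1, isDeriv_decomp hT.2⟩
  exact ⟨simple_decomp T, hdecomp, wfAdjunct_and_simpleAdjunct_of_mem_decomp T,
    mem_adjPlus_decomp T, adjPlus_subset_treesSet hdecomp (isDerivA_of_mem_decomp hT.2)⟩
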